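/- Let U be a unification system and θ an idempotent most general unifier of U with vars(img(θ)) ⊆ vars(U). Then for every term p ∈ Sub(img(θ)) there exists a term q ∈ Sub(U) such that p = qθ. -/

import Mathlib

/-! ### Terms -/

/-- First-order terms: variables, ordinary constants, nonces (an infinite
subset of the constants), and function applications. -/
inductive Term : Type
  | var : ℕ → Term
  | cst : ℕ → Term
  | nonce : ℕ → Term
  | func : ℕ → List Term → Term

namespace Term

/-- The subterm relation. -/
inductive IsSubterm : Term → Term → Prop
  | refl (t : Term) : IsSubterm t t
  | func {s t : Term} {f : ℕ} {args : List Term} :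
      t ∈ args → IsSubterm s t → IsSubterm s (func f args)

/-- The set of subterms of a term. -/
def sub (t : Term) : Set Term := {s | IsSubterm s t}

/-- The set of (indices of) variables of a term. -/
def varsSet (t : Term) : Set ℕ := {x | IsSubterm (var x) t}

/-- A term is ground if it has no variables. -/
def Ground (t : Term) : Prop := varsSet t = ∅

/-- The term is a variable. -/
def IsVar : Term → Prop
  | var _ => True
  | _ => False

/-- Application of a substitution to a term. -/
noncomputable def subst (σ : ℕ → Term) : Term → Term
  | var x => σ x
  | cst c => cst c
  | nonce n => nonce n
  | func f args => func f (args.attach.map (fun a => Term.subst σ a.1))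
decreasing_by
  have := List.sizeOf_lt_of_mem a.2
  simp only [Term.func.sizeOf_spec]
  omega

/-- The function symbol `f` occurs in the term `t`. -/
def OccursFun (f : ℕ) (t : Term) : Prop := ∃ args, IsSubterm (func f args) t

end Term

/-! ### Substitutions -/

/-- Substitutions (maps from variables to terms). -/
abbrev Subst := ℕ → Term

namespace Subst

/-- The domain of a substitution. -/
def dom (σ : Subst) : Set ℕ := {x | σ x ≠ .var x}

/-- The image of a substitution. -/
def img (σ : Subst) : Set Term := {t | ∃ x ∈ dom σ, σ x = t}

/-- Idempotency of a substitution. -/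
def Idem (σ : Subst) : Prop := ∀ x, (σ x).subst σ = σ x

/-- A substitution is ground if its image consists of ground terms. -/
def IsGround (σ : Subst) : Prop := ∀ x ∈ dom σ, (σ x).Ground

open Classical in
/-- Union of two substitutions (intended for disjoint domains). -/
noncomputable def union (σ τ : Subst) : Subst := fun x =>
  if σ x = Term.var x then τ x else σ x

end Subst

/-- Subterms of a set of terms. -/
def subT (T : Set Term) : Set Term := {s | ∃ t ∈ T, Term.IsSubterm s t}

/-- Variables of a set of terms. -/
def varsT (T : Set Term) : Set ℕ := {x | ∃ t ∈ T, Term.IsSubterm (.var x) t}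

/-- DAG size of a set of terms: number of its subterms. -/
noncomputable def sizeT (T : Set Term) : ℕ := (subT T).ncard

/-- Size of a substitution: DAG size of its image. -/
noncomputable def sizeSubst (σ : Subst) : ℕ := sizeT σ.img

/-! ### Deduction systems, steps and derivations -/

/-- A deduction system: a finite set of (standard) deduction rules, each rule
being a pair (left-hand sides, right-hand side) whose right-hand-side variables
occur in the left-hand sides.  Nonce-creation rules and reception rules are
built into the notions of steps/derivations below. -/
structure DeductionSystem where
  rules : Set (List Term × Term)
  finite : rules.Finite
  wf : ∀ p ∈ rules, p.2.varsSet ⊆ varsT {u | u ∈ p.1}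

/-- A step of a derivation: a reception `? → t` or a standard deduction `l → r`
(nonce creations are standard deductions with empty left-hand side). -/
inductive Step
  | recv : Term → Step
  | std : List Term → Term → Step

namespace Step

/-- Right-hand side of a step. -/
def rhs : Step → Term
  | recv t => t
  | std _ r => r

/-- All terms occurring in the step. -/
def terms : Step → Set Term
  | recv t => {t}
  | std l r => {r} ∪ {u | u ∈ l}

end Step

/-- The set of right-hand sides of the first `k` steps of `D`. -/
def RHSset (D : List Step) (k : ℕ) : Set Term :=
  {r | ∃ j < k, ∃ s, D[j]? = some s ∧ s.rhs = r}

/-- A step is a deduction of the system `DS`: a reception of a ground term, a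
nonce creation, or a ground instance of a (standard) rule of `DS`. -/
def IsDeduction (DS : DeductionSystem) (s : Step) : Prop :=
  match s with
  | .recv t => t.Ground
  | .std l r =>
      (∀ u ∈ l, u.Ground) ∧ r.Ground ∧
        ((l = [] ∧ ∃ n, r = Term.nonce n) ∨
          ∃ p ∈ DS.rules, ∃ σ : Subst,
            l = p.1.map (Term.subst σ) ∧ r = p.2.subst σ)

/-- A derivation: a sequence of deductions in which the left-hand side of every
standard step has already been deduced. -/
def IsDerivation (DS : DeductionSystem) (D : List Step) : Prop :=
  (∀ s ∈ D, IsDeduction DS s) ∧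
  ∀ (i : ℕ) (l : List Term) (r : Term), D[i]? = some (Step.std l r) → ∀ u ∈ l, u ∈ RHSset D i

/-- The position of the first reception of `D` at index `≥ k` (or `|D|` if
there is none): (0-indexed version of) `Next(D, ·)`. -/
noncomputable def nextRecv (D : List Step) (k : ℕ) : ℕ :=
  sInf ({D.length} ∪ {j | k ≤ j ∧ ∃ t, D[j]? = some (Step.recv t)})

/-- `Der DS K`: the set of ground terms derivable from the knowledge `K`. -/
def Der (DS : DeductionSystem) (K : Set Term) : Set Term :=
  {t | ∃ D : List Step, IsDerivation DS D ∧
        (∀ (j : ℕ) (u : Term), D[j]? = some (Step.recv u) → u ∈ K) ∧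
        ∃ l, D.getLast? = some (Step.std l t)}

/-- No term is deduced twice in `D` by a standard rule. -/
def NoDuplicateStd (D : List Step) : Prop :=
  ∀ (i j : ℕ) (li lj : List Term) (r : Term), D[i]? = some (Step.std li r) → D[j]? = some (Step.std lj r) → i = j

/-- `(T,σ)`-maximality of a derivation. -/
def MaximalDeriv (DS : DeductionSystem) (T : Set Term) (σ : Subst) (D : List Step) : Prop :=
  ∀ t ∈ subT T, ∀ k ≤ D.length,
    t.subst σ ∈ Der DS (RHSset D k) → t.subst σ ∈ RHSset D (nextRecv D k)

/-! ### Constraint systems -/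

/-- A constraint: a reception `?t`, an emission `!t` or a negative
constraint `♮t`. -/
inductive Constraint
  | recv : Term → Constraint
  | send : Term → Constraint
  | neg : Term → Constraint

namespace Constraint

/-- The term of a constraint. -/
def term : Constraint → Term
  | recv t => t
  | send t => t
  | neg t => t

/-- The constraint is a send constraint. -/
def isSend : Constraint → Bool
  | send _ => true
  | _ => false

/-- Apply a substitution to a constraint. -/
noncomputable def map (θ : Subst) : Constraint → Constraint
  | recv t => recv (t.subst θ)
  | send t => send (t.subst θ)
  | neg t => neg (t.subst θ)

end Constraint

/-- A (pre-)constraint system is a finite sequence of constraints. -/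
abbrev CSystem := List Constraint

/-- The terms of a constraint system. -/
def csTerms (S : CSystem) : Set Term := {t | ∃ c ∈ S, c.term = t}

/-- `Sub(S)`. -/
def csSub (S : CSystem) : Set Term := subT (csTerms S)

/-- `vars(S)`. -/
def csVars (S : CSystem) : Set ℕ := varsT (csTerms S)

/-- `|Sub(S)|`. -/
noncomputable def csSize (S : CSystem) : ℕ := sizeT (csTerms S)

/-- Apply a substitution to all constraints of a system. -/
noncomputable def csSubst (S : CSystem) (θ : Subst) : CSystem := S.map (Constraint.map θ)

/-- Origination and determination: `S` is a genuine constraint system. -/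
def IsCS (S : CSystem) : Prop :=
  (∀ (i : ℕ) (t : Term), S[i]? = some (Constraint.send t) →
      t.varsSet ⊆ {x | ∃ j < i, ∃ u : Term, S[j]? = some (Constraint.recv u) ∧ x ∈ u.varsSet}) ∧
  (∀ (i : ℕ) (t : Term), S[i]? = some (Constraint.neg t) →
      t.varsSet ⊆ {x | ∃ (j : ℕ) (u : Term), S[j]? = some (Constraint.recv u) ∧ x ∈ u.varsSet})

/-- The knowledge produced by the send constraints up to (and including) index
`i`, instantiated by `σ` (this is `{tⱼσ : j ≤ prev(i), S[j] = !tⱼ}`). -/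
def knowledge (S : CSystem) (σ : Subst) (i : ℕ) : Set Term :=
  {u | ∃ j ≤ i, ∃ t, S[j]? = some (Constraint.send t) ∧ u = t.subst σ}

/-- A solution of a constraint system. -/
structure IsSolution (DS : DeductionSystem) (S : CSystem) (σ : Subst) : Prop where
  ground : σ.IsGround
  idem : σ.Idem
  dom_eq : σ.dom = csVars S
  recv_mem : ∀ (i : ℕ) (t : Term), S[i]? = some (Constraint.recv t) → t.subst σ ∈ Der DS (knowledge S σ i)
  neg_not_mem : ∀ (i : ℕ) (t : Term), S[i]? = some (Constraint.neg t) → t.subst σ ∉ Der DS (knowledge S σ i)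

/-- `prev(i)`: the last send index `≤ i` of `S`, if any. -/
def prevSend (S : CSystem) (i : ℕ) : Option ℕ :=
  ((List.range (i + 1)).filter (fun j => ((S[j]?).map Constraint.isSend).getD false)).max?

/-- `(S,σ)`-compliance of a derivation `D` with the mapping `α`: `α` is a
strictly increasing bijection from the send indices of `S` onto the reception
positions of `D`, sending `!t` to the reception `? → tσ`. -/
structure Compliant (S : CSystem) (σ : Subst) (D : List Step) (α : ℕ → ℕ) : Prop where
  mono : ∀ (i j : ℕ) (ti tj : Term), S[i]? = some (Constraint.send ti) →
    S[j]? = some (Constraint.send tj) → i < j → α i < α j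
  maps : ∀ (i : ℕ) (t : Term), S[i]? = some (Constraint.send t) →
    D[α i]? = some (Step.recv (t.subst σ))
  surj : ∀ (j : ℕ) (u : Term), D[j]? = some (Step.recv u) →
    ∃ i t, S[i]? = some (Constraint.send t) ∧ α i = j

/-- Position in `D` of the first reception strictly after the reception
corresponding (via `α`) to the last send constraint `≤ i` of `S` (or the first
reception of `D` if there is no such send): this is `Next(D, α(prev(i)))`. -/
noncomputable def cutoff (S : CSystem) (D : List Step) (α : ℕ → ℕ) (i : ℕ) : ℕ :=
  match prevSend S i with
  | none => nextRecv D 0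
  | some p => nextRecv D (α p + 1)

/-- `D, σ, α ⊢ S`: the derivation `D` is a proof of `σ ⊨ S`. -/
structure IsProof (DS : DeductionSystem) (S : CSystem) (σ : Subst)
    (D : List Step) (α : ℕ → ℕ) : Prop where
  deriv : IsDerivation DS D
  compliant : Compliant S σ D α
  recv_proved : ∀ (i : ℕ) (t : Term), S[i]? = some (Constraint.recv t) →
    ∃ j < cutoff S D α i, ∃ s, D[j]? = some s ∧ s.rhs = t.subst σ
  neg_not_mem : ∀ (i : ℕ) (t : Term), S[i]? = some (Constraint.neg t) →
    t.subst σ ∉ Der DS (knowledge S σ i)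

/-! ### Subterm deduction systems -/

/-- A composition rule: `x₁,…,xₙ → f(x₁,…,xₙ)` with pairwise distinct
variables `xᵢ`. -/
def IsCompRule (p : List Term × Term) : Prop :=
  ∃ (f : ℕ) (xs : List ℕ), xs.Nodup ∧ p.1 = xs.map Term.var ∧
    p.2 = Term.func f (xs.map Term.var)

/-- A decomposition rule: the right-hand side is a subterm of a left-hand
side. -/
def IsDecompRule (p : List Term × Term) : Prop :=
  ∃ l ∈ p.1, p.2 ∈ l.sub

/-- A subterm deduction system: every standard rule is a composition or a
decomposition rule. -/
def SubtermSystem (DS : DeductionSystem) : Prop :=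
  ∀ p ∈ DS.rules, IsCompRule p ∨ IsDecompRule p

/-- A step is a composition: a reception, a nonce creation, or an instance of
a composition rule of `DS`. -/
def IsCompositionStep (DS : DeductionSystem) (s : Step) : Prop :=
  match s with
  | .recv _ => True
  | .std l r =>
      (l = [] ∧ ∃ n, r = Term.nonce n) ∨
        ∃ p ∈ DS.rules, IsCompRule p ∧
          ∃ σ : Subst, l = p.1.map (Term.subst σ) ∧ r = p.2.subst σ

/-- `l → r` is an instance (not necessarily ground) of a standard deduction
rule of the system. -/
def StdRuleInstance (DS : DeductionSystem) (l : List Term) (r : Term) : Prop :=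
  (l = [] ∧ ∃ n, r = Term.nonce n) ∨
    ∃ p ∈ DS.rules, ∃ σ : Subst, l = p.1.map (Term.subst σ) ∧ r = p.2.subst σ

/-- DAG size of a rule. -/
noncomputable def ruleSize (p : List Term × Term) : ℕ :=
  sizeT ({p.2} ∪ {u | u ∈ p.1})

/-- Maximal size of a decomposition rule of the system. -/
noncomputable def maxDecompSize (DS : DeductionSystem) : ℕ :=
  sSup {n | ∃ p ∈ DS.rules, IsDecompRule p ∧ ruleSize p = n}

/-! ### Localization -/

/-- `T` localizes the derivation `D` for `σ`. -/
def Localizes (DS : DeductionSystem) (T : Set Term) (σ : Subst) (D : List Step) : Prop :=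
  ∀ (i : ℕ) (l : List Term) (r : Term), D[i]? = some (Step.std l r) →
    ∀ t ∈ subT T, ¬ t.IsVar → t.subst σ = r →
      ∃ ts : List Term, (∀ u ∈ ts, u ∈ subT T) ∧
        (∀ u ∈ ts, u.subst σ ∈ RHSset D i) ∧ StdRuleInstance DS ts t

/-- `T` one-to-one localizes `D` for `σ`. -/
def OneToOneLocalizes (DS : DeductionSystem) (T : Set Term) (σ : Subst)
    (D : List Step) : Prop :=
  Localizes DS T σ D ∧ Set.InjOn (Term.subst σ) (subT T)

/-! ### Terms of a derivation, `Out(S)` -/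

/-- The terms occurring in a derivation. -/
def derTerms (D : List Step) : Set Term := {t | ∃ s ∈ D, t ∈ s.terms}

/-- `Sub(D)`. -/
def subD (D : List Step) : Set Term := subT (derTerms D)

/-- The terms of the send constraints of `S`. -/
def outTerms (S : CSystem) : Set Term := {t | Constraint.send t ∈ S}

/-! ### Milestone sequences -/

/-- An element of a milestone sequence: `→ t` or `? → t`. -/
inductive MStep
  | ded : Term → MStep
  | recvm : Term → MStep

/-- The term of a milestone element. -/
def MStep.term : MStep → Term
  | ded t => t
  | recvm t => t

/-- `M` is a milestone candidate sequence of `D` for `(T,σ)`. -/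
def IsMilestoneOf (T : Set Term) (σ : Subst) (D : List Step) (M : List MStep) : Prop :=
  (∀ m ∈ M, m.term ∈ subT T) ∧
  ∃ α : ℕ → ℕ, (∀ i j, i < j → j < M.length → α i < α j) ∧
    ∀ (i : ℕ) (m : MStep), M[i]? = some m →
      match m with
      | MStep.recvm t => D[α i]? = some (Step.recv (t.subst σ))
      | MStep.ded t => ∃ l, D[α i]? = some (Step.std l (t.subst σ))

/-- `M` is the `(T,σ)`-milestone sequence of `D`: a candidate of maximal
length. -/
def IsMilestoneSeq (T : Set Term) (σ : Subst) (D : List Step) (M : List MStep) : Prop :=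
  IsMilestoneOf T σ D M ∧ ∀ M', IsMilestoneOf T σ D M' → M'.length ≤ M.length

/-! ### Free pairing symbol -/

/-- `f` occurs in the rule `p`. -/
def OccursInRule (f : ℕ) (p : List Term × Term) : Prop :=
  (∃ t ∈ p.1, t.OccursFun f) ∨ p.2.OccursFun f

/-- The system contains a composition rule `x₁, x₂ → f(x₁,x₂)` where the
binary symbol `f` occurs in no other rule. -/
def FreePairing (DS : DeductionSystem) : Prop :=
  ∃ (f x₁ x₂ : ℕ), x₁ ≠ x₂ ∧
    ([Term.var x₁, Term.var x₂], Term.func f [Term.var x₁, Term.var x₂]) ∈ DS.rules ∧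
    ∀ p ∈ DS.rules, OccursInRule f p →
      p = ([Term.var x₁, Term.var x₂], Term.func f [Term.var x₁, Term.var x₂])

/-! ### Unification -/

/-- `σ` is a unifier of the unification system `U`. -/
def IsUnifier (U : Set (Term × Term)) (σ : Subst) : Prop :=
  ∀ pq ∈ U, Term.subst σ pq.1 = Term.subst σ pq.2

/-- `θ` is a most general unifier of `U`. -/
def IsMGU (U : Set (Term × Term)) (θ : Subst) : Prop :=
  IsUnifier U θ ∧ ∀ σ, IsUnifier U σ → ∃ τ : Subst, ∀ x, σ x = (θ x).subst τ

/-- The terms of a unification system. -/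
def unifTerms (U : Set (Term × Term)) : Set Term :=
  {t | ∃ pq ∈ U, t = pq.1 ∨ t = pq.2}

/-- The variables of a unification system. -/
def unifVars (U : Set (Term × Term)) : Set ℕ := varsT (unifTerms U)

/-!
If some `p ⊑ θ x₀` were not of the form `qθ`, then replacing `p` by a fresh variable `z` in
the image of `θ` would still give a unifier `σ`, because `θ` never produces `p` from a subterm
of `U`. Writing `σ = θτ`, the substitution `τ` must fix the variables of `θ x₀`, since they occur
in `U` and are fixed by the idempotent `θ`; hence `σ x₀ = θ x₀`, which does not contain `z`,
although `z` replaced the occurrence of `p` in it.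
-/

theorem List.map_eq_self_iff {α : Type*} {f : α → α} {l : List α} :
    l.map f = l ↔ ∀ x ∈ l, f x = x := by
  simpa using List.map_eq_map_iff (f := f) (g := id) (l := l)

namespace Term

@[induction_eliminator]
theorem induction {P : Term → Prop} (var : ∀ x, P (var x)) (cst : ∀ c, P (cst c))
    (nonce : ∀ n, P (nonce n)) (func : ∀ f args, (∀ a ∈ args, P a) → P (func f args)) :
    ∀ t, P t
  | .var x => var x
  | .cst c => cst c
  | .nonce n => nonce n
  | .func f args => func f args fun a _ => induction var cst nonce func a
decreasing_by
  have := List.sizeOf_lt_of_mem ‹a ∈ args›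
  simp only [Term.func.sizeOf_spec]
  omega

variable {σ θ : Subst}

@[simp]
theorem subst_var (x : ℕ) : (var x).subst σ = σ x := by rw [Term.subst]

@[simp]
theorem subst_cst (c : ℕ) : (cst c).subst σ = cst c := by rw [Term.subst]

@[simp]
theorem subst_nonce (n : ℕ) : (nonce n).subst σ = nonce n := by rw [Term.subst]

@[simp]
theorem subst_func (f : ℕ) (args : List Term) :
    (func f args).subst σ = func f (args.map (Term.subst σ)) := by
  rw [Term.subst]
  simp

theorem IsSubterm.subst_eq_self {s t : Term} (h : IsSubterm s t) (ht : t.subst θ = t) :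
    s.subst θ = s := by
  induction h with
  | refl => exact ht
  | func hmem _ ih =>
    simp only [subst_func, func.injEq, List.map_eq_self_iff] at ht
    exact ih (ht.2 _ hmem)

theorem subst_eq_self_of_forall_var {t : Term} (h : ∀ y, IsSubterm (var y) t → σ y = var y) :
    t.subst σ = t := by
  induction t with
  | var x => simpa using h x (.refl _)
  | cst c => exact subst_cst c
  | nonce n => exact subst_nonce n
  | func f args ih =>
    simp only [subst_func, func.injEq, true_and, List.map_eq_self_iff]
    exact fun a ha => ih a ha fun y hy => h y (.func ha hy)

theorem finite_varsSet (t : Term) : t.varsSet.Finite := by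
  induction t with
  | var x => exact (Set.finite_singleton x).subset fun y hy => by cases hy; rfl
  | cst c => exact Set.finite_empty.subset fun y hy => by cases hy
  | nonce n => exact Set.finite_empty.subset fun y hy => by cases hy
  | func f args ih =>
    refine ((List.finite_toSet args).biUnion ih).subset fun y hy => ?_
    cases hy with
    | func hmem hsub => exact Set.mem_biUnion hmem hsub

open Classical in
noncomputable def replace (p : Term) (z : ℕ) (t : Term) : Term :=
  if t = p then var z else
    match t with
    | func f args => func f (args.attach.map fun a => replace p z a.1)
    | t => t
decreasing_by
  have := List.sizeOf_lt_of_mem a.2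
  simp only [Term.func.sizeOf_spec]
  omega

variable {p : Term} (z : ℕ)

theorem replace_self : replace p z p = var z := by
  rw [replace.eq_def, if_pos rfl]

theorem replace_var {x : ℕ} (h : var x ≠ p) : replace p z (var x) = var x := by
  rw [replace.eq_def, if_neg h]

theorem replace_cst {c : ℕ} (h : cst c ≠ p) : replace p z (cst c) = cst c := by
  rw [replace.eq_def, if_neg h]

theorem replace_nonce {n : ℕ} (h : nonce n ≠ p) : replace p z (nonce n) = nonce n := by
  rw [replace.eq_def, if_neg h]

theorem replace_func {f : ℕ} {args : List Term} (h : func f args ≠ p) :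
    replace p z (func f args) = func f (args.map (replace p z)) := by
  rw [replace.eq_def, if_neg h]
  simp

theorem var_isSubterm_replace {t : Term} (h : IsSubterm p t) : IsSubterm (var z) (replace p z t) := by
  induction h with
  | refl => rw [replace_self]; exact .refl _
  | @func _ f args hmem _ ih =>
    by_cases hp : func f args = p
    · rw [hp, replace_self]; exact .refl _
    · rw [replace_func z hp]; exact .func (List.mem_map_of_mem hmem) ih

theorem replace_subst {s : Term} (h : ∀ q, IsSubterm q s → q.subst θ ≠ p) :
    replace p z (s.subst θ) = s.subst (replace p z ∘ θ) := by
  induction s with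
  | var x => simp
  | cst c => simpa using replace_cst z (by simpa using h _ (.refl _))
  | nonce n => simpa using replace_nonce z (by simpa using h _ (.refl _))
  | func f args ih =>
    rw [subst_func, replace_func z (by simpa using h _ (.refl _)), subst_func, List.map_map]
    congr 1
    exact List.map_congr_left fun a ha => ih a ha fun q hq => h q (.func ha hq)

end Term

open Term

theorem IsUnifier.replace_comp {U : Set (Term × Term)} {θ : Subst} {p : Term} (z : ℕ)
    (hθ : IsUnifier U θ) (hp : ∀ q ∈ subT (unifTerms U), q.subst θ ≠ p) :
    IsUnifier U (replace p z ∘ θ) := by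
  intro pq hpq
  have hsub (t : Term) (ht : t = pq.1 ∨ t = pq.2) (q : Term) (hq : IsSubterm q t) :
      q.subst θ ≠ p :=
    hp q ⟨t, ⟨pq, hpq, ht⟩, hq⟩
  rw [← replace_subst z (hsub _ (.inl rfl)), ← replace_subst z (hsub _ (.inr rfl)), hθ pq hpq]

theorem Subst.Idem.apply_eq_var {θ : Subst} (hθ : θ.Idem) {x y : ℕ}
    (hy : IsSubterm (var y) (θ x)) : θ y = var y := by
  simpa using hy.subst_eq_self (hθ x)

theorem mgu_subterms_general (U : Set (Term × Term))
    (θ : Subst) (hθ : θ.Idem) (hmgu : IsMGU U θ)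
    (hv : varsT θ.img ⊆ unifVars U) :
    ∀ p ∈ subT θ.img, ∃ q ∈ subT (unifTerms U), p = q.subst θ := by
  rintro p ⟨_, ⟨x₀, hx₀, rfl⟩, hp⟩
  by_contra! hnot
  replace hnot : ∀ q ∈ subT (unifTerms U), q.subst θ ≠ p := fun q hq h => hnot q hq h.symm
  obtain ⟨z, hz⟩ := (finite_varsSet (θ x₀)).infinite_compl.nonempty
  obtain ⟨τ, hτ⟩ := hmgu.2 _ (hmgu.1.replace_comp z hnot)
  have hτ_fix : ∀ y, IsSubterm (var y) (θ x₀) → τ y = var y := by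
    intro y hy
    have hθy : θ y = var y := hθ.apply_eq_var hy
    obtain ⟨u, hu, hyu⟩ := hv ⟨θ x₀, ⟨x₀, hx₀, rfl⟩, hy⟩
    have hyp : var y ≠ p := by simpa [hθy] using hnot (var y) ⟨u, hu, hyu⟩
    simpa [hθy, replace_var z hyp] using (hτ y).symm
  have hσx₀ : replace p z (θ x₀) = θ x₀ := by
    rw [← Function.comp_apply (f := replace p z), hτ x₀, subst_eq_self_of_forall_var hτ_fix]
  exact hz (hσx₀ ▸ var_isSubterm_replace z hp)

/-- Lemma 6: every subterm of the image of an idempotent mgu `θ` of `U` with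
`vars(img(θ)) ⊆ vars(U)` is the `θ`-instance of a subterm of `U`. -/
theorem mgu_subterms (U : Set (Term × Term)) (hU : U.Finite)
    (θ : Subst) (hθ : θ.Idem) (hmgu : IsMGU U θ)
    (hv : varsT θ.img ⊆ unifVars U) :
    ∀ p ∈ subT θ.img, ∃ q ∈ subT (unifTerms U), p = q.subst θ :=
  mgu_subterms_general U θ hθ hmgu hv
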